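/- Consider the MWU update: given distributions p_i^{ℓ−1} over a finite set 𝒳^priv for i ∈ [n], a function f with ‖f(x^pub, y)‖₂ ≤ 1, vector φ ∈ ℝ^d, parameters η ∈ (0, 1/c], c > 0, and the update p_i^ℓ(y) ∝ p_i^{ℓ−1}(y)·exp(η·⟨φ, f^clip(x_i^pub, y)⟩) where f^clip(x,y) = clip_{φ,c}(f(x,y)). Define the potential Ψ^ℓ = (1/n)·Σ_i ln(1/p_i^ℓ(x_i^priv)). Then Ψ^{ℓ−1} − Ψ^ℓ ≥ η·⟨φ, f^clip(D) − f^clip(𝐩^{ℓ−1})⟩ − c²η², where f^clip(D) = (1/n)Σ_i f^clip(x_i) and f^clip(𝐩^{ℓ−1}) = (1/n)Σ_i Σ_y p_i^{ℓ−1}(y)·f^clip(x_i^pub, y). -/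
import Mathlib


open RealInnerProductSpace Finset

noncomputable def clip {d : ℕ} (φ : EuclideanSpace ℝ (Fin d)) (c : ℝ)
    (u : EuclideanSpace ℝ (Fin d)) : EuclideanSpace ℝ (Fin d) :=
  if ⟪φ, u⟫ ≠ 0 then (min 1 (c / |⟪φ, u⟫|)) • u else u

lemma abs_inner_clip_le {d : ℕ} (φ : EuclideanSpace ℝ (Fin d)) {c : ℝ} (hc : 0 < c)
    (u : EuclideanSpace ℝ (Fin d)) : |⟪φ, clip φ c u⟫| ≤ c := by
  have key : ∀ t : ℝ, t ≠ 0 → |min 1 (c / |t|) * t| ≤ c := by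
    intro t ht
    have ht' : 0 < |t| := abs_pos.mpr ht
    rw [abs_mul]
    rcases le_total 1 (c / |t|) with h1 | h1
    · rw [min_eq_left h1, abs_one, one_mul]
      calc |t| ≤ (c / |t|) * |t| := by nlinarith
        _ = c := by field_simp
    · rw [min_eq_right h1, abs_of_nonneg (by positivity), div_mul_cancel₀ _ ht'.ne']
  unfold clip
  split_ifs with h
  · rw [real_inner_smul_right]
    exact key _ h
  · rw [not_not.mp h]
    simpa using hc.le

lemma exp_le_one_add_add_sq {x : ℝ} (h : |x| ≤ 1) : Real.exp x ≤ 1 + x + x ^ 2 := by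
  have hb := Real.exp_bound h (n := 3) (by norm_num)
  have hsum : ∑ i ∈ Finset.range 3, x ^ i / (Nat.factorial i) = 1 + x + x ^ 2 / 2 := by
    simp [Finset.sum_range_succ, Nat.factorial]
  rw [hsum] at hb
  norm_num [Nat.factorial] at hb
  have h3 : |x| ^ 3 ≤ x ^ 2 := by
    have : |x| ^ 3 = x ^ 2 * |x| := by rw [← sq_abs]; ring
    nlinarith [abs_nonneg x, sq_abs x]
  have := abs_le.mp hb
  nlinarith [this.2]

theorem mwu_potential_decrease {d n : ℕ} {Xpriv : Type*} [Fintype Xpriv]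
    (f : Fin n → Xpriv → EuclideanSpace ℝ (Fin d)) (hf : ∀ i y, ‖f i y‖ ≤ 1)
    (xpriv : Fin n → Xpriv)
    (φ : EuclideanSpace ℝ (Fin d)) (c η : ℝ) (hc : 0 < c) (hη0 : 0 < η) (hη : η ≤ 1 / c)
    (p0 p1 : Fin n → Xpriv → ℝ)
    (hp0pos : ∀ i y, 0 < p0 i y) (hp0sum : ∀ i, ∑ y, p0 i y = 1)
    (fc : Fin n → Xpriv → EuclideanSpace ℝ (Fin d))
    (hfc : ∀ i y, fc i y = clip φ c (f i y))
    (hp1 : ∀ i y, p1 i y =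
      p0 i y * Real.exp (η * ⟪φ, fc i y⟫) /
        ∑ y', p0 i y' * Real.exp (η * ⟪φ, fc i y'⟫)) :
    η * ⟪φ, ((n : ℝ)⁻¹ • ∑ i, fc i (xpriv i)) -
          ((n : ℝ)⁻¹ • ∑ i, ∑ y, p0 i y • fc i y)⟫ - c ^ 2 * η ^ 2 ≤
      ((1 : ℝ) / n) * ∑ i, Real.log (1 / p0 i (xpriv i)) -
        ((1 : ℝ) / n) * ∑ i, Real.log (1 / p1 i (xpriv i)) := by
  -- basic facts
  have habs : ∀ i y, |⟪φ, fc i y⟫| ≤ c := fun i y => by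
    rw [hfc]; exact abs_inner_clip_le φ hc (f i y)
  have hηc : η * c ≤ 1 := by
    rw [le_div_iff₀ hc] at hη; linarith
  set Z : Fin n → ℝ := fun i => ∑ y', p0 i y' * Real.exp (η * ⟪φ, fc i y'⟫) with hZ
  rcases Nat.eq_zero_or_pos n with hn | hn
  · subst hn
    simp only [Finset.univ_eq_empty, Finset.sum_empty, Nat.cast_zero, inv_zero, smul_zero,
      sub_zero, inner_zero_right, mul_zero, zero_mul, zero_sub, neg_nonpos]
    positivity
  have hXne : Nonempty Xpriv := by
    by_contra h
    have h1 := hp0sum ⟨0, hn⟩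
    rw [Finset.univ_eq_empty_iff.mpr (not_nonempty_iff.mp h), Finset.sum_empty] at h1
    norm_num at h1
  have hZpos : ∀ i, 0 < Z i := fun i =>
    Finset.sum_pos (fun y _ => mul_pos (hp0pos i y) (Real.exp_pos _)) Finset.univ_nonempty
  -- per-i bound on log Z i
  have hlogZ : ∀ i, Real.log (Z i) ≤ η * (∑ y, p0 i y * ⟪φ, fc i y⟫) + c ^ 2 * η ^ 2 := by
    intro i
    have hZle : Z i ≤ 1 + η * (∑ y, p0 i y * ⟪φ, fc i y⟫) + c ^ 2 * η ^ 2 := by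
      have hterm : ∀ y, p0 i y * Real.exp (η * ⟪φ, fc i y⟫) ≤
          p0 i y * (1 + η * ⟪φ, fc i y⟫ + c ^ 2 * η ^ 2) := by
        intro y
        refine mul_le_mul_of_nonneg_left ?_ (hp0pos i y).le
        have ha : |η * ⟪φ, fc i y⟫| ≤ 1 := by
          rw [abs_mul, abs_of_pos hη0]
          calc η * |⟪φ, fc i y⟫| ≤ η * c := by
                exact mul_le_mul_of_nonneg_left (habs i y) hη0.le
            _ ≤ 1 := hηc
        have := exp_le_one_add_add_sq ha
        have hsq : (η * ⟪φ, fc i y⟫) ^ 2 ≤ c ^ 2 * η ^ 2 := by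
          have h1 : ⟪φ, fc i y⟫ ^ 2 ≤ c ^ 2 := by
            rw [← sq_abs]
            exact pow_le_pow_left₀ (abs_nonneg _) (habs i y) 2
          nlinarith [sq_nonneg η]
        linarith
      calc Z i ≤ ∑ y, p0 i y * (1 + η * ⟪φ, fc i y⟫ + c ^ 2 * η ^ 2) :=
            Finset.sum_le_sum fun y _ => hterm y
        _ = ∑ y, (p0 i y + η * (p0 i y * ⟪φ, fc i y⟫) + p0 i y * (c ^ 2 * η ^ 2)) := by
            apply Finset.sum_congr rfl; intro y _; ring
        _ = 1 + η * (∑ y, p0 i y * ⟪φ, fc i y⟫) + c ^ 2 * η ^ 2 := by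
            rw [Finset.sum_add_distrib, Finset.sum_add_distrib, ← Finset.mul_sum,
              ← Finset.sum_mul, hp0sum i]
            ring
    calc Real.log (Z i) ≤ Z i - 1 := Real.log_le_sub_one_of_pos (hZpos i)
      _ ≤ _ := by linarith
  -- rewrite RHS per i
  have hRHS : ∀ i, Real.log (1 / p0 i (xpriv i)) - Real.log (1 / p1 i (xpriv i)) =
      η * ⟪φ, fc i (xpriv i)⟫ - Real.log (Z i) := by
    intro i
    have hp1pos : 0 < p1 i (xpriv i) := by
      rw [hp1]; exact div_pos (mul_pos (hp0pos _ _) (Real.exp_pos _)) (hZpos i)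
    rw [Real.log_div one_ne_zero (ne_of_gt (hp0pos i (xpriv i))),
        Real.log_div one_ne_zero (ne_of_gt hp1pos), hp1,
        Real.log_div (ne_of_gt (mul_pos (hp0pos _ _) (Real.exp_pos _))) (ne_of_gt (hZpos i)),
        Real.log_mul (ne_of_gt (hp0pos _ _)) (ne_of_gt (Real.exp_pos _)), Real.log_exp]
    ring
  -- rewrite LHS inner product
  have hinner : ⟪φ, ((n : ℝ)⁻¹ • ∑ i, fc i (xpriv i)) -
      ((n : ℝ)⁻¹ • ∑ i, ∑ y, p0 i y • fc i y)⟫ =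
      (n : ℝ)⁻¹ * ((∑ i, ⟪φ, fc i (xpriv i)⟫) - ∑ i, ∑ y, p0 i y * ⟪φ, fc i y⟫) := by
    simp [inner_sub_right, inner_smul_right, inner_sum, mul_sub]
  rw [hinner]
  have hsum : ∀ i ∈ Finset.univ (α := Fin n),
      η * ⟪φ, fc i (xpriv i)⟫ - η * (∑ y, p0 i y * ⟪φ, fc i y⟫) - c ^ 2 * η ^ 2 ≤
      Real.log (1 / p0 i (xpriv i)) - Real.log (1 / p1 i (xpriv i)) := by
    intro i _
    rw [hRHS i]
    have := hlogZ i
    linarith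
  have hsum' := Finset.sum_le_sum hsum
  have hn' : (0 : ℝ) < n := Nat.cast_pos.mpr hn
  have key := mul_le_mul_of_nonneg_left hsum' (by positivity : (0:ℝ) ≤ (n : ℝ)⁻¹)
  have hcount : ∑ _i : Fin n, c ^ 2 * η ^ 2 = (n : ℝ) * (c ^ 2 * η ^ 2) := by
    simp [Finset.sum_const, mul_comm]
  have hA : (n : ℝ)⁻¹ * ∑ i, (η * ⟪φ, fc i (xpriv i)⟫ -
        η * (∑ y, p0 i y * ⟪φ, fc i y⟫) - c ^ 2 * η ^ 2) =
      η * ((n : ℝ)⁻¹ * ((∑ i, ⟪φ, fc i (xpriv i)⟫) -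
        ∑ i, ∑ y, p0 i y * ⟪φ, fc i y⟫)) - c ^ 2 * η ^ 2 := by
    rw [Finset.sum_sub_distrib, Finset.sum_sub_distrib, hcount, ← Finset.mul_sum,
      ← Finset.mul_sum]
    field_simp
  have hB : (n : ℝ)⁻¹ * ∑ i, (Real.log (1 / p0 i (xpriv i)) -
        Real.log (1 / p1 i (xpriv i))) =
      (n : ℝ)⁻¹ * ∑ i, Real.log (1 / p0 i (xpriv i)) -
        (n : ℝ)⁻¹ * ∑ i, Real.log (1 / p1 i (xpriv i)) := by
    rw [Finset.sum_sub_distrib, mul_sub]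
  rw [one_div]
  rw [hA] at key
  rw [hB] at key
  exact key
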